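/- arXiv:1208.3909 — 4 statements merged into one kernel-verified Lean document; each statement's English description precedes it below -/
import Mathlib

section
/- Let p be a prime, m > 1 an integer prime to p, and let M/K be a Z/m-Galois extension of complete discrete valuation fields of characteristic (0,p), with K containing the p-th roots of unity. Let a ∈ M^× \ (M^×)^p and L = M(a^{1/p}). If L/K is Galois with group G ≅ Z/p ⋊ Z/m non-commutative, then p divides v_M(a), where v_M is the normalized valuation on M. -/
/-!
Let `σ ∈ Gal(L/M)` not commute with `c ∈ Gal(L/K)`; such a pair exists because `Gal(M/K)` is
cyclic and `Gal(L/K)` is not abelian. Conjugation by `c` acts on `Gal(L/M) ≅ μ_p` by some power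
`j ≢ 1 (mod p)`, which makes `c(α) / α^j` fixed by `σ`, hence equal to some `β ∈ M`. Taking
`p`-th powers gives `c(a) = β^p a^j` in `M`. As `c` preserves `v_M`, this yields
`v_M(a) = p v_M(β) + j v_M(a)`, so `p ∣ (j - 1) v_M(a)` and therefore `p ∣ v_M(a)`.
-/

open Polynomial Module IsDedekindDomain HeightOneSpectrum
open scoped WithZero

theorem MonoidHom.exists_mem_ker_mul_ne_mul {G H : Type*} [Group G] [Group H] [IsCyclic H]
    (f : G →* H) (hG : ¬ ∀ a b : G, a * b = b * a) : ∃ c σ : G, σ ∈ f.ker ∧ c * σ ≠ σ * c := by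
  by_contra! h
  exact hG (f.isMulCommutative_of_isCyclic_of_ker_le_center
    fun σ hσ => Subgroup.mem_center_iff.mpr fun c => h c σ hσ).is_comm.comm

theorem finrank_eq_of_adjoin_eq_top_of_pow_eq {M L : Type*} [Field M] [Field L] [Algebra M L]
    {p : ℕ} (hp : p.Prime) {a : M} (ha : ∀ b : M, b ^ p ≠ a) {α : L}
    (hα : α ^ p = algebraMap M L a) (hgen : Algebra.adjoin M {α} = ⊤) :
    finrank M L = p := by
  have hmonic := monic_X_pow_sub_C a hp.ne_zero
  have hroot : aeval α (X ^ p - C a) = 0 := by simp [hα]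
  have hint : IsIntegral M α := ⟨_, hmonic, by rwa [← aeval_def]⟩
  rw [(PowerBasis.ofAdjoinEqTop hint hgen).finrank, PowerBasis.ofAdjoinEqTop_dim,
    ← minpoly.eq_of_irreducible_of_monic (X_pow_sub_C_irreducible_of_prime hp ha) hroot hmonic,
    natDegree_X_pow_sub_C]

theorem AlgEquiv.exists_algebraMap_eq_of_apply_eq {M L : Type*} [Field M] [Field L]
    [Algebra M L] (hrank : (finrank M L).Prime) {σ : L ≃ₐ[M] L} (hσ : σ ≠ 1) {t : L}
    (ht : σ t = t) : ∃ β : M, algebraMap M L β = t := by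
  have := IntermediateField.isSimpleOrder_of_finrank_prime M L hrank
  set F := IntermediateField.fixedField (Subgroup.zpowers σ)
  have hfix : ∀ x, x ∈ F ↔ σ x = x := fun x => by
    refine ⟨fun hx => hx ⟨σ, Subgroup.mem_zpowers σ⟩, fun hx g => ?_⟩
    exact Subgroup.zpowers_le (H := MulAction.stabilizer (L ≃ₐ[M] L) x) |>.mpr hx g.2
  rcases eq_bot_or_eq_top F with hF | hF
  · exact IntermediateField.mem_bot.mp (hF ▸ (hfix t).mpr ht)
  · exact absurd (AlgEquiv.ext fun x => (hfix x).mp (hF ▸ IntermediateField.mem_top)) hσ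

section Kummer

variable {K M L : Type*} [Field K] [Field M] [Field L] [Algebra K L] [Algebra M L]

theorem IsPrimitiveRoot.algEquiv_apply_of_pow_eq_one {p : ℕ} [NeZero p] {ζ : K}
    (hζ : IsPrimitiveRoot ζ p) (g : L ≃ₐ[K] L) {x : L} (hx : x ^ p = 1) : g x = x := by
  obtain ⟨i, -, rfl⟩ := (hζ.map_of_injective (algebraMap K L).injective).eq_pow_of_pow_eq_one hx
  rw [map_pow, AlgEquiv.commutes]

theorem AlgEquiv.eq_of_apply_eq_of_adjoin_eq_top {α : L} (hgen : Algebra.adjoin M {α} = ⊤)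
    {g₁ g₂ : L ≃ₐ[K] L} (h₁ : ∀ x : M, g₁ (algebraMap M L x) = algebraMap M L x)
    (h₂ : ∀ x : M, g₂ (algebraMap M L x) = algebraMap M L x) (h : g₁ α = g₂ α) : g₁ = g₂ := by
  have := AlgHom.ext_of_adjoin_eq_top hgen
    (φ₁ := (AlgEquiv.ofRingEquiv (f := g₁.toRingEquiv) h₁ : L →ₐ[M] L))
    (φ₂ := (AlgEquiv.ofRingEquiv (f := g₂.toRingEquiv) h₂ : L →ₐ[M] L)) (Set.eqOn_singleton.mpr h)
  exact AlgEquiv.ext fun x => DFunLike.congr_fun this x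

theorem div_pow_eq_one_of_pow_eq_algebraMap {p : ℕ} {a : M} {α : L} (hα0 : α ≠ 0)
    (hα : α ^ p = algebraMap M L a) {g : L ≃ₐ[K] L}
    (hg : ∀ x : M, g (algebraMap M L x) = algebraMap M L x) : (g α / α) ^ p = 1 := by
  rw [div_pow, ← map_pow, hα, hg, div_self (hα ▸ pow_ne_zero p hα0)]

theorem exists_apply_div_pow_fixed {p : ℕ} (hp : p.Prime) {ζ : K} (hζ : IsPrimitiveRoot ζ p)
    {a : M} {α : L} (hα0 : α ≠ 0) (hα : α ^ p = algebraMap M L a)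
    (hgen : Algebra.adjoin M {α} = ⊤) {c σ : L ≃ₐ[K] L}
    (hσ : ∀ x : M, σ (algebraMap M L x) = algebraMap M L x)
    (hτ : ∀ x : M, (c⁻¹ * σ * c) (algebraMap M L x) = algebraMap M L x)
    (hcσ : c * σ ≠ σ * c) :
    ∃ j : ℕ, ¬ (p : ℤ) ∣ j - 1 ∧ σ (c α / α ^ j) = c α / α ^ j := by
  have : NeZero p := ⟨hp.ne_zero⟩
  set θ := σ α / α
  have hθ : IsPrimitiveRoot θ p := by
    refine isPrimitiveRoot_of_mem_nthRootsFinset hp ((mem_nthRootsFinset hp.pos 1).mpr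
      (div_pow_eq_one_of_pow_eq_algebraMap hα0 hα hσ)) fun h => hcσ ?_
    have : σ = 1 := AlgEquiv.eq_of_apply_eq_of_adjoin_eq_top hgen hσ (fun _ => rfl)
      (by rw [AlgEquiv.one_apply, ← div_eq_one_iff_eq hα0]; exact h)
    simp [this]
  have hθ0 : θ ≠ 0 := hθ.ne_zero hp.ne_zero
  obtain ⟨j, -, hj⟩ := hθ.eq_pow_of_pow_eq_one (div_pow_eq_one_of_pow_eq_algebraMap hα0 hα hτ)
  refine ⟨j, fun ⟨d, hd⟩ => hcσ ?_, ?_⟩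
  · have hθj : θ ^ j = θ := by
      rw [← zpow_natCast, show (j : ℤ) = (j - 1) + 1 by ring, zpow_add_one₀ hθ0,
        (hθ.zpow_eq_one_iff_dvd _).mpr ⟨d, hd⟩, one_mul]
    have : c⁻¹ * σ * c = σ := AlgEquiv.eq_of_apply_eq_of_adjoin_eq_top hgen hτ hσ
      (by rw [← div_left_inj' hα0]; exact hj ▸ hθj)
    calc c * σ = c * (c⁻¹ * σ * c) := by rw [this]
      _ = σ * c := by group
  · have hσα : σ α = θ * α := (div_mul_cancel₀ _ hα0).symm
    have hτα : (c⁻¹ * σ * c) α = θ ^ j * α := by rw [hj, div_mul_cancel₀ _ hα0]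
    have hσcα : σ (c α) = θ ^ j * c α := by
      have : σ (c α) = c ((c⁻¹ * σ * c) α) := by simp [AlgEquiv.mul_apply]
      rw [this, hτα, map_mul, hζ.algEquiv_apply_of_pow_eq_one c
        (by rw [← pow_mul, mul_comm, pow_mul, hθ.pow_eq_one, one_pow])]
    rw [map_div₀, map_pow, hσcα, hσα, mul_pow, mul_div_mul_left _ _ (pow_ne_zero j hθ0)]

theorem exists_apply_algebraMap_eq_pow_mul_pow {p : ℕ} (hp : p.Prime) {ζ : K}
    (hζ : IsPrimitiveRoot ζ p) {a : M} (ha : ∀ b : M, b ^ p ≠ a) {α : L}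
    (hα : α ^ p = algebraMap M L a) (hgen : Algebra.adjoin M {α} = ⊤) {c σ : L ≃ₐ[K] L}
    (hσ : ∀ x : M, σ (algebraMap M L x) = algebraMap M L x)
    (hτ : ∀ x : M, (c⁻¹ * σ * c) (algebraMap M L x) = algebraMap M L x)
    (hcσ : c * σ ≠ σ * c) :
    ∃ (β : M) (j : ℕ), β ≠ 0 ∧ ¬ (p : ℤ) ∣ j - 1 ∧
      c (algebraMap M L a) = algebraMap M L (β ^ p * a ^ j) := by
  have hα0 : α ≠ 0 := by
    rintro rfl
    exact ha 0 ((algebraMap M L).injective (by simp [← hα, hp.ne_zero]))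
  obtain ⟨j, hj, hfixed⟩ := exists_apply_div_pow_fixed hp hζ hα0 hα hgen hσ hτ hcσ
  have hσ1 : AlgEquiv.ofRingEquiv (f := σ.toRingEquiv) hσ ≠ 1 := fun h => hcσ <| by
    rw [show σ = 1 from AlgEquiv.ext fun x => DFunLike.congr_fun h x, mul_one, one_mul]
  obtain ⟨β, hβ⟩ := AlgEquiv.exists_algebraMap_eq_of_apply_eq
    (finrank_eq_of_adjoin_eq_top_of_pow_eq hp ha hα hgen ▸ hp) hσ1 hfixed
  have hcα : c α = algebraMap M L β * α ^ j := by
    rw [hβ, div_mul_cancel₀ _ (pow_ne_zero _ hα0)]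
  refine ⟨β, j, ?_, hj, ?_⟩
  · rintro rfl
    simp [hα0] at hcα
  · rw [← hα, map_pow, hcα, mul_pow, ← pow_mul, mul_comm j p, pow_mul, hα, map_mul, map_pow,
      map_pow]

theorem AlgEquiv.apply_algebraMap_of_mem_ker_restrictNormalHom [Algebra K M]
    [IsScalarTower K M L] [Normal K M] {g : L ≃ₐ[K] L}
    (hg : g ∈ (AlgEquiv.restrictNormalHom (K₁ := L) M).ker) (x : M) :
    g (algebraMap M L x) = algebraMap M L x := by
  rw [← AlgEquiv.restrictNormal_commutes, show g.restrictNormal M = 1 from hg, AlgEquiv.one_apply]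

end Kummer

namespace IsDiscreteValuationRing

variable {B : Type*} [CommRing B] [IsDomain B] [IsDiscreteValuationRing B]

theorem intValuation_isUnit {u : B} (hu : IsUnit u) :
    (maximalIdeal B).intValuation u = 1 :=
  intValuation_eq_one_iff.mpr fun h => (IsLocalRing.mem_maximalIdeal u).mp h hu

theorem intValuation_irreducible {ϖ : B} (hϖ : Irreducible ϖ) :
    (maximalIdeal B).intValuation ϖ = WithZero.exp (-1 : ℤ) :=
  intValuation_singleton _ hϖ.ne_zero ((irreducible_iff_uniformizer ϖ).mp hϖ)

theorem intValuation_map_ringEquiv {F : Type*} [EquivLike F B B]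
    [RingEquivClass F B B] (ψ : F) (b : B) :
    (maximalIdeal B).intValuation (ψ b) = (maximalIdeal B).intValuation b := by
  rcases eq_or_ne b 0 with rfl | hb
  · simp
  obtain ⟨ϖ, hϖ⟩ := exists_irreducible B
  obtain ⟨n, u, rfl⟩ := eq_unit_mul_pow_irreducible hb hϖ
  simp only [map_mul, map_pow, intValuation_isUnit (u.isUnit.map ψ), intValuation_isUnit u.isUnit,
    intValuation_irreducible hϖ, intValuation_irreducible (hϖ.map ψ)]

theorem valuation_map_algEquiv (A : Type*) {K M : Type*} [CommRing A]
    [Field K] [Field M] [Algebra A K] [IsFractionRing A K] [Algebra K M] [Algebra A M]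
    [IsScalarTower A K M] [Algebra.IsAlgebraic K M] [Algebra A B] [Algebra B M]
    [IsScalarTower A B M] [IsIntegralClosure B A M] [IsFractionRing B M] (φ : M ≃ₐ[K] M) (x : M) :
    (maximalIdeal B).valuation M (φ x) = (maximalIdeal B).valuation M x := by
  obtain ⟨b, s, -, rfl⟩ := IsFractionRing.div_surjective (A := B) x
  simp only [map_div₀, ← algebraMap_galRestrict_apply A, valuation_of_algebraMap,
    intValuation_map_ringEquiv]

end IsDiscreteValuationRing

theorem Valuation.prime_dvd_log_of_eq_pow_mul_pow {M : Type*} [Field M]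
    (v : Valuation M ℤᵐ⁰) {p j : ℕ} (hp : p.Prime) (hj : ¬ (p : ℤ) ∣ j - 1) {a β : M}
    (ha : a ≠ 0) (hβ : β ≠ 0) (h : v a = v (β ^ p * a ^ j)) :
    (p : ℤ) ∣ WithZero.log (v a) := by
  have hva : v a ≠ 0 := (Valuation.ne_zero_iff v).mpr ha
  have hvβ : v β ≠ 0 := (Valuation.ne_zero_iff v).mpr hβ
  have hlog := congrArg WithZero.log h
  rw [map_mul, map_pow, map_pow, WithZero.log_mul (pow_ne_zero _ hvβ) (pow_ne_zero _ hva),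
    WithZero.log_pow, WithZero.log_pow, nsmul_eq_mul, nsmul_eq_mul] at hlog
  have hdvd : (p : ℤ) ∣ (j - 1) * WithZero.log (v a) :=
    ⟨-WithZero.log (v β), by linear_combination -hlog⟩
  exact ((Nat.prime_iff_prime_int.mp hp).dvd_mul.mp hdvd).resolve_left hj

open IsLocalRing

theorem stmt1_general (p : ℕ) (hp : p.Prime)
    (A : Type*) [CommRing A]
    (K : Type*) [Field K] [Algebra A K] [IsFractionRing A K]
    -- `K` contains the `p`-th roots of unity
    (ζ : K) (hζ : IsPrimitiveRoot ζ p)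
    -- `M/K` is a `ℤ/m`-Galois extension
    (M : Type*) [Field M] [Algebra K M] [IsGalois K M]
    (hMcyc : IsCyclic (M ≃ₐ[K] M))
    -- `B`, the valuation ring of `M`, is the integral closure of `A` in `M`
    (B : Type*) [CommRing B] [IsDomain B] [IsDiscreteValuationRing B]
    [Algebra A B] [Algebra B M] [Algebra A M]
    [IsScalarTower A B M] [IsScalarTower A K M]
    [IsFractionRing B M] [IsIntegralClosure B A M]
    -- `a ∈ M^× \ (M^×)^p`
    (a : M) (ha : a ≠ 0) (hap : ¬ ∃ x : M, x ^ p = a)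
    -- `L = M(a^{1/p})`
    (L : Type*) [Field L] [Algebra M L] [Algebra K L] [IsScalarTower K M L]
    (α : L) (hα : α ^ p = algebraMap M L a)
    (hgen : Algebra.adjoin M ({α} : Set L) = ⊤)
    -- `L/K` is Galois with group `ℤ/p ⋊ ℤ/m`, non-commutative
    [IsGalois K L]
    (hnoncomm : ¬ ∀ σ τ : (L ≃ₐ[K] L), σ * τ = τ * σ) :
    -- conclusion: `p ∣ v_M(a)` for the normalized valuation `v_M` on `M`
    ∃ k : ℤ, (p : ℤ) ∣ k ∧
      (IsDedekindDomain.HeightOneSpectrum.valuation M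
        (⟨maximalIdeal B, (maximalIdeal.isMaximal B).isPrime,
          IsDiscreteValuationRing.not_a_field B⟩ :
            IsDedekindDomain.HeightOneSpectrum B)) a =
        ((Multiplicative.ofAdd k : Multiplicative ℤ) : WithZero (Multiplicative ℤ)) := by
  have : IsCyclic (M ≃ₐ[K] M) := hMcyc
  obtain ⟨c, σ, hσ, hcσ⟩ := (AlgEquiv.restrictNormalHom M).exists_mem_ker_mul_ne_mul hnoncomm
  have hτ := (AlgEquiv.restrictNormalHom M).normal_ker.conj_mem' σ hσ c
  obtain ⟨β, j, hβ, hj, hc⟩ := exists_apply_algebraMap_eq_pow_mul_pow hp hζ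
    (fun b hb => hap ⟨b, hb⟩) hα hgen (σ.apply_algebraMap_of_mem_ker_restrictNormalHom hσ)
    (AlgEquiv.apply_algebraMap_of_mem_ker_restrictNormalHom hτ) hcσ
  have hca : c.restrictNormal M a = β ^ p * a ^ j :=
    (algebraMap M L).injective (by rw [AlgEquiv.restrictNormal_commutes, hc])
  have hval := IsDiscreteValuationRing.valuation_map_algEquiv A (B := B) (c.restrictNormal M) a
  rw [hca] at hval
  exact ⟨_, Valuation.prime_dvd_log_of_eq_pow_mul_pow _ hp hj ha hβ hval.symm,
    (WithZero.exp_log ((Valuation.ne_zero_iff _).mpr ha)).symm⟩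

/-- let `p` be a prime, `m > 1` prime to `p`, and `M/K` a `ℤ/m`-Galois extension
of complete discrete valuation fields of characteristic `(0, p)` (`K = Frac(A)`, `M = Frac(B)`
with `B` the integral closure of the complete DVR `A` in `M`), with `K` containing the `p`-th
roots of unity.  Let `a ∈ M^× \ (M^×)^p` and `L = M(a^{1/p})`.  If `L/K` is Galois with group
`G ≅ ℤ/p ⋊ ℤ/m` non-commutative, then `p` divides `v_M(a)`, where `v_M` is the normalized
valuation on `M`. -/
theorem stmt1 (p m : ℕ) (hp : p.Prime) (hm : 1 < m) (hmp : Nat.Coprime m p)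
    (A : Type*) [CommRing A] [IsDomain A] [IsDiscreteValuationRing A]
    [IsAdicComplete (maximalIdeal A) A]
    (K : Type*) [Field K] [Algebra A K] [IsFractionRing A K] [CharZero K]
    (hres : CharP (ResidueField A) p)
    -- `K` contains the `p`-th roots of unity
    (ζ : K) (hζ : IsPrimitiveRoot ζ p)
    -- `M/K` is a `ℤ/m`-Galois extension
    (M : Type*) [Field M] [Algebra K M] [IsGalois K M]
    (hMdeg : Nat.card (M ≃ₐ[K] M) = m) (hMcyc : IsCyclic (M ≃ₐ[K] M))
    -- `B`, the valuation ring of `M`, is the integral closure of `A` in `M`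
    (B : Type*) [CommRing B] [IsDomain B] [IsDiscreteValuationRing B]
    [Algebra A B] [Algebra B M] [Algebra A M]
    [IsScalarTower A B M] [IsScalarTower A K M]
    [IsFractionRing B M] [IsIntegralClosure B A M]
    -- `a ∈ M^× \ (M^×)^p`
    (a : M) (ha : a ≠ 0) (hap : ¬ ∃ x : M, x ^ p = a)
    -- `L = M(a^{1/p})`
    (L : Type*) [Field L] [Algebra M L] [Algebra K L] [IsScalarTower K M L]
    (α : L) (hα : α ^ p = algebraMap M L a)
    (hgen : Algebra.adjoin M ({α} : Set L) = ⊤)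
    -- `L/K` is Galois with group `ℤ/p ⋊ ℤ/m`, non-commutative
    [IsGalois K L] (hLdeg : Nat.card (L ≃ₐ[K] L) = p * m)
    (hnoncomm : ¬ ∀ σ τ : (L ≃ₐ[K] L), σ * τ = τ * σ) :
    -- conclusion: `p ∣ v_M(a)` for the normalized valuation `v_M` on `M`
    ∃ k : ℤ, (p : ℤ) ∣ k ∧
      (IsDedekindDomain.HeightOneSpectrum.valuation M
        (⟨maximalIdeal B, (maximalIdeal.isMaximal B).isPrime,
          IsDiscreteValuationRing.not_a_field B⟩ :
            IsDedekindDomain.HeightOneSpectrum B)) a =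
        ((Multiplicative.ofAdd k : Multiplicative ℤ) : WithZero (Multiplicative ℤ)) :=
  stmt1_general p hp A K ζ hζ M hMcyc B a ha hap L α hα hgen hnoncomm
end

section
/- Let p be a prime, n ≥ 1, and let K be a field of characteristic 0 containing a primitive p^n-th root of unity. Suppose a, b ∈ K^× are such that K(a^{1/p^n}) = K(b^{1/p^n}) =: L and [L : K] = p^n. Then there exist an integer r with p ∤ r and c ∈ K^× such that b = a^r · c^{p^n}. -/
/-!
Let `σ` be the automorphism with `σ α = ζ α`; it has order `N = p ^ n = [L : K]`, so it generates
`Gal(L/K)`. Since `(σ β / β) ^ N = 1`, also `σ β = ζ ^ r β` for some `r`. An automorphism that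
multiplies a nonzero generator of `L` by a scalar `c` has the same order as `c`, so `ζ ^ r` has
order `N`, i.e. `r` is prime to `N`. Finally `β / α ^ r` is fixed by `σ`, hence lies in `K`.
-/

open IntermediateField Module

section Galois

variable {K L : Type*} [Field K] [Field L] [Algebra K L]

theorem AlgEquiv.pow_apply_eq_algebraMap_pow_mul {σ : L ≃ₐ[K] L} {x : L} {c : K}
    (h : σ x = algebraMap K L c * x) (j : ℕ) : (σ ^ j) x = algebraMap K L (c ^ j) * x := by
  induction j with
  | zero => simp
  | succ j ih =>
    rw [pow_succ', AlgEquiv.mul_apply, ih, map_mul, AlgEquiv.commutes, h, pow_succ', map_mul,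
      mul_left_comm, mul_assoc]

theorem AlgEquiv.eq_one_of_apply_eq_self {x : L} (hx : Algebra.adjoin K {x} = ⊤)
    {σ : L ≃ₐ[K] L} (h : σ x = x) : σ = 1 :=
  AlgEquiv.coe_toAlgHom_injective <| AlgHom.ext_of_adjoin_eq_top hx <| by simpa using h

theorem AlgEquiv.orderOf_eq_orderOf_of_apply_eq_algebraMap_mul {x : L} (hx0 : x ≠ 0)
    (hx : Algebra.adjoin K {x} = ⊤) {σ : L ≃ₐ[K] L} {c : K} (h : σ x = algebraMap K L c * x) :
    orderOf σ = orderOf c := by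
  refine orderOf_eq_orderOf_iff.mpr fun j => ⟨fun hj => ?_, fun hj => ?_⟩
  · have hfix := σ.pow_apply_eq_algebraMap_pow_mul h j
    rw [hj, AlgEquiv.one_apply, eq_comm, mul_eq_right₀ hx0] at hfix
    exact (algebraMap K L).injective (by rw [hfix, map_one])
  · exact eq_one_of_apply_eq_self hx (by rw [σ.pow_apply_eq_algebraMap_pow_mul h, hj, map_one,
      one_mul])

theorem mem_range_algebraMap_of_orderOf_eq_finrank [FiniteDimensional K L] [IsGalois K L]
    {σ : Gal(L/K)} (hσ : orderOf σ = finrank K L) {x : L} (hx : σ x = x) :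
    x ∈ Set.range (algebraMap K L) := by
  have htop : Subgroup.zpowers σ = ⊤ := Subgroup.eq_top_of_card_eq _ <| by
    rw [Nat.card_zpowers, hσ, IsGalois.card_aut_eq_finrank]
  have hstab : Subgroup.zpowers σ ≤ MulAction.stabilizer Gal(L/K) x := Subgroup.zpowers_le.mpr hx
  exact (IsGalois.mem_range_algebraMap_iff_fixed x).mpr fun τ => hstab (htop ▸ Subgroup.mem_top τ)

theorem exists_apply_eq_pow_mul_of_pow_eq_algebraMap {N : ℕ} [NeZero N] {ζ : K}
    (hζ : IsPrimitiveRoot ζ N) {b : K} {β : L} (hβ0 : β ≠ 0) (hβ : β ^ N = algebraMap K L b)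
    (σ : Gal(L/K)) : ∃ r : ℕ, σ β = algebraMap K L (ζ ^ r) * β := by
  have hroot : (σ β * β⁻¹) ^ N = 1 := by
    rw [mul_pow, inv_pow, ← map_pow, hβ, AlgEquiv.commutes, ← hβ]
    exact mul_inv_cancel₀ (pow_ne_zero N hβ0)
  obtain ⟨r, -, hr⟩ := (hζ.map_of_injective (algebraMap K L).injective).eq_pow_of_pow_eq_one hroot
  exact ⟨r, by rw [map_pow, hr, inv_mul_cancel_right₀ hβ0]⟩

end Galois

theorem IsPrimitiveRoot.nonempty_primitiveRoots {R : Type*} [CommRing R] [IsDomain R] {ζ : R}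
    {k : ℕ} (hζ : IsPrimitiveRoot ζ k) (hk : 0 < k) : (primitiveRoots k R).Nonempty :=
  ⟨ζ, (mem_primitiveRoots hk).mpr hζ⟩

section Kummer

variable {K L : Type*} [Field K] [Field L] [Algebra K L] [FiniteDimensional K L] {ζ : K}
  {a : K} {α : L}

theorem isGalois_of_root_adjoin_eq_top (hζ : IsPrimitiveRoot ζ (finrank K L))
    (hα : α ^ finrank K L = algebraMap K L a) (hgen : K⟮α⟯ = ⊤) : IsGalois K L :=
  have hprim := hζ.nonempty_primitiveRoots finrank_pos
  have := isSplittingField_X_pow_sub_C_of_root_adjoin_eq_top hprim hα hgen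
  isGalois_of_isSplittingField_X_pow_sub_C hprim
    (irreducible_X_pow_sub_C_of_root_adjoin_eq_top hα hgen) L

theorem exists_algEquiv_apply_eq_mul_of_root_adjoin_eq_top
    (hζ : IsPrimitiveRoot ζ (finrank K L)) (hα : α ^ finrank K L = algebraMap K L a)
    (hgen : K⟮α⟯ = ⊤) : ∃ σ : Gal(L/K), σ α = algebraMap K L ζ * α := by
  have hprim := hζ.nonempty_primitiveRoots finrank_pos
  have := isSplittingField_X_pow_sub_C_of_root_adjoin_eq_top hprim hα hgen
  have : NeZero (finrank K L) := ⟨finrank_pos.ne'⟩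
  have H := irreducible_X_pow_sub_C_of_root_adjoin_eq_top hα hgen
  refine ⟨(autEquivZmod H L hζ).symm (Multiplicative.ofAdd ((1 : ℕ) : ZMod _)), ?_⟩
  rw [autEquivZmod_symm_apply_natCast H L hα hζ 1, pow_one, Algebra.smul_def]

theorem exists_eq_pow_mul_pow_of_root_adjoin_eq_top (hζ : IsPrimitiveRoot ζ (finrank K L))
    {b : K} {β : L} (ha : a ≠ 0) (hb : b ≠ 0) (hα : α ^ finrank K L = algebraMap K L a)
    (hβ : β ^ finrank K L = algebraMap K L b) (hgenα : Algebra.adjoin K {α} = ⊤)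
    (hgenβ : Algebra.adjoin K {β} = ⊤) :
    ∃ r : ℕ, r.Coprime (finrank K L) ∧ ∃ c : K, c ≠ 0 ∧ b = a ^ r * c ^ finrank K L := by
  set N := finrank K L
  have : NeZero N := ⟨finrank_pos.ne'⟩
  have hα0 : α ≠ 0 := ne_zero_pow (NeZero.ne N) (by rw [hα]; exact (map_ne_zero _).mpr ha)
  have hβ0 : β ≠ 0 := ne_zero_pow (NeZero.ne N) (by rw [hβ]; exact (map_ne_zero _).mpr hb)
  have hKα : K⟮α⟯ = ⊤ := (eq_adjoin_of_eq_algebra_adjoin K {α} ⊤ hgenα.symm).symm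
  have := isGalois_of_root_adjoin_eq_top hζ hα hKα
  obtain ⟨σ, hσα⟩ := exists_algEquiv_apply_eq_mul_of_root_adjoin_eq_top hζ hα hKα
  obtain ⟨r, hσβ⟩ := exists_apply_eq_pow_mul_of_pow_eq_algebraMap hζ hβ0 hβ σ
  have hσ : orderOf σ = N :=
    (σ.orderOf_eq_orderOf_of_apply_eq_algebraMap_mul hα0 hgenα hσα).trans hζ.eq_orderOf.symm
  have hr : r.Coprime N := by
    rw [← hζ.pow_iff_coprime (NeZero.pos N), ← hσ,
      σ.orderOf_eq_orderOf_of_apply_eq_algebraMap_mul hβ0 hgenβ hσβ]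
    exact IsPrimitiveRoot.orderOf _
  have hσγ : σ (β / α ^ r) = β / α ^ r := by
    rw [map_div₀, map_pow, hσα, hσβ, mul_pow, map_pow,
      mul_div_mul_left _ _ (pow_ne_zero r ((map_ne_zero _).mpr (hζ.ne_zero (NeZero.ne N))))]
  obtain ⟨c, hc⟩ := mem_range_algebraMap_of_orderOf_eq_finrank hσ hσγ
  refine ⟨r, hr, c, ?_, (algebraMap K L).injective ?_⟩
  · rintro rfl
    exact div_ne_zero hβ0 (pow_ne_zero r hα0) (by rw [← hc, map_zero])
  · rw [← hβ, map_mul, map_pow, map_pow, ← hα, hc, div_pow, ← pow_mul, ← pow_mul, mul_comm r N,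
      mul_div_cancel₀ _ (pow_ne_zero _ hα0)]

end Kummer

theorem stmt3_general (p : ℕ) (hp : p.Prime) (n : ℕ) (hn : 1 ≤ n)
    (K : Type*) [Field K]
    (ζ : K) (hζ : IsPrimitiveRoot ζ (p ^ n))
    (a b : K) (ha : a ≠ 0) (hb : b ≠ 0)
    (L : Type*) [Field L] [Algebra K L]
    (α β : L)
    (hα : α ^ (p ^ n) = algebraMap K L a)
    (hβ : β ^ (p ^ n) = algebraMap K L b)
    (hgenα : Algebra.adjoin K ({α} : Set L) = ⊤)
    (hgenβ : Algebra.adjoin K ({β} : Set L) = ⊤)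
    (hdeg : Module.finrank K L = p ^ n) :
    ∃ (r : ℤ) (c : K), ¬ (p : ℤ) ∣ r ∧ c ≠ 0 ∧ b = a ^ r * c ^ (p ^ n) := by
  have : FiniteDimensional K L := .of_finrank_pos (hdeg ▸ pow_pos hp.pos n)
  rw [← hdeg] at hζ hα hβ
  obtain ⟨r, hr, c, hc0, hbc⟩ :=
    exists_eq_pow_mul_pow_of_root_adjoin_eq_top hζ ha hb hα hβ hgenα hgenβ
  rw [hdeg, Nat.coprime_pow_right_iff hn] at hr
  refine ⟨r, c, ?_, hc0, by rw [zpow_natCast, hbc, hdeg]⟩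
  rw [Int.natCast_dvd_natCast]
  exact hp.coprime_iff_not_dvd.mp hr.symm

/-- Kummer-theoretic comparison of two generators of the same cyclic degree-`p^n`
Kummer extension: if `K` is a characteristic-zero field containing a primitive `p^n`-th root of
unity and `K(a^{1/p^n}) = K(b^{1/p^n}) = L` with `[L : K] = p^n`, then `b = a^r * c^{p^n}` for
some integer `r` prime to `p` and some `c ∈ Kˣ`. -/
theorem stmt3 (p : ℕ) (hp : p.Prime) (n : ℕ) (hn : 1 ≤ n)
    (K : Type*) [Field K] [CharZero K]
    (ζ : K) (hζ : IsPrimitiveRoot ζ (p ^ n))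
    (a b : K) (ha : a ≠ 0) (hb : b ≠ 0)
    (L : Type*) [Field L] [Algebra K L]
    (α β : L)
    (hα : α ^ (p ^ n) = algebraMap K L a)
    (hβ : β ^ (p ^ n) = algebraMap K L b)
    (hgenα : Algebra.adjoin K ({α} : Set L) = ⊤)
    (hgenβ : Algebra.adjoin K ({β} : Set L) = ⊤)
    (hdeg : Module.finrank K L = p ^ n) :
    ∃ (r : ℤ) (c : K), ¬ (p : ℤ) ∣ r ∧ c ≠ 0 ∧ b = a ^ r * c ^ (p ^ n) :=
  stmt3_general p hp n hn K ζ hζ a b ha hb L α β hα hβ hgenα hgenβ hdeg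
end

section
/- Let m ≥ 1 be an integer. Let B_new and B_prim be finite sets with |B_prim| = 3, and let σ : B_new ⊔ B_prim → ℚ be such that every σ_b is a positive element of (1/m)ℤ, σ_b ≥ 1 + 1/m for all b ∈ B_new, and 1 = Σ_{b ∈ B_new}(σ_b - 1) + Σ_{b ∈ B_prim} σ_b. Then no σ_b is an integer, and Σ_{b ∈ B_new ⊔ B_prim} ⟨σ_b⟩ = 1, where ⟨·⟩ denotes fractional part. -/
/-! Since every summand of the vanishing-cycles sum is nonnegative and `Bprim` has at least two
elements, each `σ b` with `b ∈ Bprim` lies in `(0, 1)` and each `σ b` with `b ∈ Bnew` lies in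
`(1, 2)`. Hence no `σ b` is an integer, the fractional parts are `σ b` resp. `σ b - 1`, and their
sum is the right-hand side of the vanishing-cycles formula. -/

open Finset

lemma Int.fract_eq_sub_of_mem_Ioo {K : Type*} [Ring K] [LinearOrder K] [FloorRing K]
    {x : K} {n : ℤ} (hx : x ∈ Set.Ioo (n : K) (n + 1)) : Int.fract x = x - n := by
  rw [Int.fract, Int.floor_eq_iff.mpr ⟨hx.1.le, hx.2⟩]

lemma Int.not_exists_intCast_eq_of_mem_Ioo {K : Type*} [Ring K] [LinearOrder K]
    [IsStrictOrderedRing K] {x : K} {n : ℤ} (hx : x ∈ Set.Ioo (n : K) (n + 1)) :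
    ¬ ∃ k : ℤ, x = k := by
  rintro ⟨k, rfl⟩
  have hlo : n < k := by exact_mod_cast hx.1
  have hhi : k < n + 1 := by exact_mod_cast hx.2
  omega

lemma Fintype.lt_sum_of_one_lt_card {ι M : Type*} [Fintype ι] [AddCommMonoid M] [PartialOrder M]
    [IsOrderedCancelAddMonoid M] (hι : 1 < Fintype.card ι) {f : ι → M} (hf : ∀ i, 0 < f i)
    (i : ι) : f i < ∑ j, f j := by
  obtain ⟨j, hji⟩ := Fintype.exists_ne_of_one_lt_card hι i
  exact single_lt_sum hji (mem_univ i) (mem_univ j) (hf j) fun k _ _ => (hf k).le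

namespace VanishingCycles

variable {K : Type*} [CommRing K] [LinearOrder K] [IsStrictOrderedRing K]
  {Bnew Bprim : Type*} [Fintype Bnew] [Fintype Bprim] {σ : Bnew ⊕ Bprim → K}

lemma inr_lt_one (hprim : 1 < Fintype.card Bprim) (hpos : ∀ b, 0 < σ (Sum.inr b))
    (hnew : ∀ b, 1 ≤ σ (Sum.inl b))
    (hvc : 1 = ∑ b : Bnew, (σ (Sum.inl b) - 1) + ∑ b : Bprim, σ (Sum.inr b)) (b : Bprim) :
    σ (Sum.inr b) < 1 := by
  have hnew_nonneg : 0 ≤ ∑ c : Bnew, (σ (Sum.inl c) - 1) :=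
    sum_nonneg fun c _ => sub_nonneg.mpr (hnew c)
  linarith [Fintype.lt_sum_of_one_lt_card hprim hpos b]

lemma inl_lt_two [Nonempty Bprim] (hpos : ∀ b, 0 < σ (Sum.inr b))
    (hnew : ∀ b, 1 ≤ σ (Sum.inl b))
    (hvc : 1 = ∑ b : Bnew, (σ (Sum.inl b) - 1) + ∑ b : Bprim, σ (Sum.inr b)) (b : Bnew) :
    σ (Sum.inl b) < 2 := by
  have hprim_pos : 0 < ∑ c : Bprim, σ (Sum.inr c) := sum_pos (fun c _ => hpos c) univ_nonempty
  have hle : σ (Sum.inl b) - 1 ≤ ∑ c : Bnew, (σ (Sum.inl c) - 1) :=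
    single_le_sum (f := fun c => σ (Sum.inl c) - 1) (fun c _ => sub_nonneg.mpr (hnew c))
      (mem_univ b)
  linarith

end VanishingCycles

theorem stmt9_general (m : ℕ) (hm : 1 ≤ m)
    (Bnew Bprim : Type*) [Fintype Bnew] [Fintype Bprim]
    (hprim : Fintype.card Bprim = 3)
    (σ : Bnew ⊕ Bprim → ℚ)
    (hpos : ∀ b, 0 < σ b)
    (hnew : ∀ b : Bnew, 1 + 1 / (m : ℚ) ≤ σ (Sum.inl b))
    (hvc : (1 : ℚ) = ∑ b : Bnew, (σ (Sum.inl b) - 1) + ∑ b : Bprim, σ (Sum.inr b)) :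
    (∀ b, ¬ ∃ n : ℤ, σ b = (n : ℚ)) ∧ ∑ b, Int.fract (σ b) = 1 := by
  have : Nonempty Bprim := Fintype.card_pos_iff.mp (by omega)
  have hinv_pos : (0 : ℚ) < 1 / m := by positivity
  have hnew_one : ∀ b, 1 ≤ σ (Sum.inl b) := fun b => by linarith [hnew b]
  let floorσ : Bnew ⊕ Bprim → ℤ := Sum.elim (fun _ => 1) (fun _ => 0)
  have hIoo : ∀ b, σ b ∈ Set.Ioo (floorσ b : ℚ) (floorσ b + 1)
    | .inl b => by
      have hlt := VanishingCycles.inl_lt_two (fun _ => hpos _) hnew_one hvc b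
      simp only [floorσ, Sum.elim_inl, Int.cast_one, Set.mem_Ioo]
      constructor <;> linarith [hnew b]
    | .inr b => by
      have hlt := VanishingCycles.inr_lt_one (by omega) (fun _ => hpos _) hnew_one hvc b
      simp only [floorσ, Sum.elim_inr, Int.cast_zero, zero_add, Set.mem_Ioo]
      exact ⟨hpos _, hlt⟩
  refine ⟨fun b => Int.not_exists_intCast_eq_of_mem_Ioo (hIoo b), ?_⟩
  rw [hvc, sum_congr rfl fun b _ => Int.fract_eq_sub_of_mem_Ioo (hIoo b), Fintype.sum_sum_type]
  simp [floorσ]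

/-- arithmetic consequence of the vanishing cycles formula for a three-point
cover: if every `σ b` is a positive element of `(1/m)ℤ`, `σ b ≥ 1 + 1/m` on the "new" part,
`|B_prim| = 3`, and `1 = ∑_{new} (σ b - 1) + ∑_{prim} σ b`, then no `σ b` is an integer and
the fractional parts sum to `1`. -/
theorem stmt9 (m : ℕ) (hm : 1 ≤ m)
    (Bnew Bprim : Type*) [Fintype Bnew] [Fintype Bprim]
    (hprim : Fintype.card Bprim = 3)
    (σ : Bnew ⊕ Bprim → ℚ)
    (hpos : ∀ b, 0 < σ b)
    (hdenom : ∀ b, ∃ k : ℤ, σ b = (k : ℚ) / m)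
    (hnew : ∀ b : Bnew, 1 + 1 / (m : ℚ) ≤ σ (Sum.inl b))
    (hvc : (1 : ℚ) = ∑ b : Bnew, (σ (Sum.inl b) - 1) + ∑ b : Bprim, σ (Sum.inr b)) :
    (∀ b, ¬ ∃ n : ℤ, σ b = (n : ℚ)) ∧ ∑ b, Int.fract (σ b) = 1 :=
  stmt9_general m hm Bnew Bprim hprim σ hpos hnew hvc
end

section
/- Let G be a finite group with a cyclic p-Sylow subgroup, and suppose p divides the order of the center Z(G). Then G has a nontrivial quotient which is a p-group. Conversely (trivially), if G has no nontrivial p-group quotient and has cyclic p-Sylow subgroup, then p does not divide |Z(G)|, so any subgroup of Z(G) has order prime to p and, being a subgroup of an abelian group that embeds in Z(G), any cyclic subgroup of Z(G) has order dividing the exponent of Z(G). -/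
/-!
If `p ∣ |Z(G)|`, pick a central element `z` of order `p`; being a central `p`-element it lies in
the Sylow subgroup `P`, which is abelian since it is cyclic. So the transfer `G → P` is defined,
and on the central element `z` it is `z ↦ z ^ [G : P]`. As `p ∤ [G : P]`, the image of `z` is
nontrivial, so `G / ker` is a nontrivial subgroup of the `p`-group `P`.
-/

/-- `G` has a nontrivial quotient which is a `p`-group. -/
def HasNontrivialPGroupQuotient (p : ℕ) (G : Type*) [Group G] : Prop :=
  ∃ N : Subgroup G, ∃ h : N.Normal,
    letI := h
    Nontrivial (G ⧸ N) ∧ IsPGroup p (G ⧸ N)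

open Subgroup
open scoped IsMulCommutative

theorem Subgroup.normal_of_le_center {G : Type*} [Group G] {H : Subgroup G}
    (hH : H ≤ center G) : H.Normal where
  conj_mem n hn g := by
    rwa [mem_center_iff.mp (hH hn) g, mul_inv_cancel_right]

theorem Sylow.mem_of_mem_center {p : ℕ} {G : Type*} [Group G] {z : G} (hz : z ∈ center G)
    (hp : IsPGroup p (zpowers z)) (P : Sylow p G) : z ∈ P :=
  haveI := normal_of_le_center ((zpowers_le (H := center G)).mpr hz)
  hp.le_sylow_of_normal P (mem_zpowers z)

theorem MonoidHom.transfer_eq_pow_of_mem_center {G A : Type*} [Group G] [CommGroup A]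
    {H : Subgroup G} [H.FiniteIndex] (ϕ : H →* A) {z : G} (hz : z ∈ center G) (hzH : z ∈ H) :
    transfer ϕ z = ϕ ⟨z ^ H.index, pow_mem hzH _⟩ :=
  transfer_eq_pow ϕ z fun k g₀ _ => by
    rw [mem_center_iff.mp (pow_mem hz k) g₀⁻¹, inv_mul_cancel_right]

theorem hasNontrivialPGroupQuotient_of_apply_ne_one {p : ℕ} {G Q : Type*} [Group G] [Group Q]
    (hQ : IsPGroup p Q) (f : G →* Q) {g : G} (hg : f g ≠ 1) :
    HasNontrivialPGroupQuotient p G := by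
  have : Nontrivial f.range :=
    (nontrivial_iff_exists_ne_one f.range).mpr ⟨f g, ⟨g, rfl⟩, hg⟩
  let e := QuotientGroup.quotientKerEquivRange f
  exact ⟨f.ker, f.normal_ker, e.toEquiv.nontrivial, (hQ.to_subgroup f.range).of_equiv e.symm⟩

theorem hasNontrivialPGroupQuotient_of_dvd_card_center {p : ℕ} [Fact p.Prime] {G : Type*}
    [Group G] [Finite G] (P : Sylow p G) [IsMulCommutative P]
    (hdvd : p ∣ Nat.card (center G)) : HasNontrivialPGroupQuotient p G := by
  obtain ⟨z, hz⟩ := exists_prime_orderOf_dvd_card' (G := center G) p hdvd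
  have hzp : orderOf (z : G) = p := by rw [orderOf_coe, hz]
  have hzP : (z : G) ∈ P :=
    P.mem_of_mem_center z.2 (IsPGroup.of_card (n := 1) (by rw [Nat.card_zpowers, hzp, pow_one]))
  refine hasNontrivialPGroupQuotient_of_apply_ne_one P.isPGroup'
    (MonoidHom.transfer (MonoidHom.id P)) (g := z) ?_
  rw [MonoidHom.transfer_eq_pow_of_mem_center _ z.2 hzP, MonoidHom.id_apply, Ne, Subtype.ext_iff,
    OneMemClass.coe_one, ← orderOf_dvd_iff_pow_eq_one, hzp]
  exact P.not_dvd_index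

theorem Subgroup.card_dvd_exponent_of_le {G : Type*} [Group G] {H K : Subgroup G} (hHK : H ≤ K)
    [IsCyclic H] : Nat.card H ∣ Monoid.exponent K :=
  IsCyclic.exponent_eq_card (α := H) ▸
    Monoid.exponent_dvd_of_monoidHom (inclusion hHK) (inclusion_injective hHK)

/-- let `G` be a finite group with cyclic `p`-Sylow subgroup.  If `p` divides
`|Z(G)|`, then `G` has a nontrivial `p`-group quotient.  Conversely (trivially), if `G` has no
nontrivial `p`-group quotient, then `p ∤ |Z(G)|`, every subgroup of `Z(G)` has order prime to
`p`, and every cyclic subgroup of `Z(G)` has order dividing the exponent of `Z(G)`. -/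
theorem stmt16 (p : ℕ) [Fact p.Prime] (G : Type*) [Group G] [Finite G]
    (P : Sylow p G) (hcyc : IsCyclic P) :
    (p ∣ Nat.card (Subgroup.center G) → HasNontrivialPGroupQuotient p G) ∧
    (¬ HasNontrivialPGroupQuotient p G →
      ¬ p ∣ Nat.card (Subgroup.center G) ∧
      (∀ H : Subgroup G, H ≤ Subgroup.center G → ¬ p ∣ Nat.card H) ∧
      (∀ H : Subgroup G, H ≤ Subgroup.center G → IsCyclic H →
        Nat.card H ∣ Monoid.exponent (Subgroup.center G))) := by
  let := hcyc.commGroup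
  have quotient_of_dvd := hasNontrivialPGroupQuotient_of_dvd_card_center (G := G) P
  refine ⟨quotient_of_dvd, fun hno => ⟨mt quotient_of_dvd hno, ?_, ?_⟩⟩
  · exact fun H hH hdvd => hno (quotient_of_dvd (hdvd.trans (card_dvd_of_le hH)))
  · exact fun H hH _ => card_dvd_exponent_of_le hH
end
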